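/- arXiv:1602.05768 — 2 statements merged into one kernel-verified Lean document; each statement's English description precedes it below -/
import Mathlib

section
/- Let G be a connected r-regular graph, k ≥ 1 an integer, v ∈ V, C ⊆ V, and t ≥ 0. Then the probability, in the COBRA process on G with branching factor k started from C_0 = C, that the hitting time Hit_C(v) exceeds t, is equal to the probability, in the BIPS process on G with source v and parameter k, that C ∩ A_t = ∅: Pr(Hit_C(v) > t | C_0 = C) = Pr(C ∩ A_t = ∅ | A_0 = {v}). -/
/-!
Both sides satisfy the same recursion in `t`. Decomposing the COBRA trajectory at its first step
and the BIPS marginal at its last step, the inductive step reduces to a one-step duality: for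
`v ∉ C`, one COBRA step from `C` avoids `A` with the same probability as one BIPS step from `A`
avoids `C`, namely `∏ u ∈ C, (1 - d_A(u)/r)^k`. Indeed the `k` choices of `u ∈ C` all miss `A`
exactly when, read in the BIPS direction, `u` is not infected by `A`; the factorisation over `u`
comes from the independence of the choices in both processes.
-/

open Finset

noncomputable section

variable {V : Type*}

/-- The random-walk transition matrix `P = A(G)/r` of a graph `G`. -/
def transMatrix [Fintype V] (G : SimpleGraph V) [DecidableRel G.Adj] (r : ℕ) :
    Matrix V V ℝ :=
  Matrix.of fun x y => if G.Adj x y then (r : ℝ)⁻¹ else 0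

/-- `λ = max_{i ≥ 2} |λ_i|`: the largest absolute value of an eigenvalue of the
transition matrix on the space orthogonal to the constant vectors.  For a connected
regular graph this is exactly the second largest eigenvalue in absolute value. -/
def secondEigen [Fintype V] (G : SimpleGraph V) [DecidableRel G.Adj] (r : ℕ) : ℝ :=
  sSup {y : ℝ | ∃ (μ : ℝ) (f : V → ℝ), y = |μ| ∧ f ≠ 0 ∧ (∑ x, f x) = 0 ∧
    (transMatrix G r).mulVec f = μ • f}

/-- `d_A(x) = |N(x) ∩ A|`. -/
def degIn [Fintype V] [DecidableEq V] (G : SimpleGraph V) [DecidableRel G.Adj]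
    (A : Finset V) (x : V) : ℕ :=
  (G.neighborFinset x ∩ A).card

/-- Probability that a vertex `u` choosing `k` uniform random neighbours (with
replacement) in an `r`-regular graph hits the set `A` at least once. -/
def pInf [Fintype V] [DecidableEq V] (G : SimpleGraph V) [DecidableRel G.Adj]
    (r k : ℕ) (A : Finset V) (u : V) : ℝ :=
  1 - (1 - (degIn G A u : ℝ) / (r : ℝ)) ^ k

/-- One-step transition probability of the BIPS process with source `v` and parameter `k`:
each `u ≠ v` is independently infected with probability `pInf`, and `v` is always infected. -/
def bipsStep [Fintype V] [DecidableEq V] (G : SimpleGraph V) [DecidableRel G.Adj]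
    (r k : ℕ) (v : V) (A B : Finset V) : ℝ :=
  if v ∈ B then
    ∏ u ∈ Finset.univ.erase v, (if u ∈ B then pInf G r k A u else 1 - pInf G r k A u)
  else 0

/-- Marginal distribution at time `t` of the Markov chain with one-step transition
probabilities `step` started at `A₀`. -/
def chainProb [Fintype V] [DecidableEq V] (step : Finset V → Finset V → ℝ)
    (A₀ : Finset V) : ℕ → Finset V → ℝ
  | 0, B => if B = A₀ then 1 else 0
  | (t+1), B => ∑ A : Finset V, chainProb step A₀ t A * step A B

/-- Probability of the trajectory `ω 0, ω 1, …, ω T` for the Markov chain with one-step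
transition probabilities `step` started at `A₀`. -/
def trajProb [DecidableEq V] (step : Finset V → Finset V → ℝ) (A₀ : Finset V) (T : ℕ)
    (ω : Fin (T+1) → Finset V) : ℝ :=
  (if ω 0 = A₀ then (1:ℝ) else 0) * ∏ i : Fin T, step (ω i.castSucc) (ω i.succ)

open scoped Classical in
/-- Probability that the trajectory `(A_0, …, A_T)` of the chain satisfies `Q`. -/
def trajPr [Fintype V] [DecidableEq V] (step : Finset V → Finset V → ℝ)
    (A₀ : Finset V) (T : ℕ) (Q : (Fin (T+1) → Finset V) → Prop) : ℝ :=
  ∑ ω : Fin (T+1) → Finset V, if Q ω then trajProb step A₀ T ω else 0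

open scoped Classical in
/-- One-step transition probability of the COBRA process with branching factor `k`:
every vertex of `C` chooses `k` neighbours independently and uniformly at random with
replacement, and `B` is the set of all chosen vertices. -/
def cobraStep [Fintype V] [DecidableEq V] (G : SimpleGraph V) [DecidableRel G.Adj]
    (k : ℕ) (C B : Finset V) : ℝ :=
  ∑ f : ↥C → Fin k → V,
    if (∀ x : ↥C, ∀ i : Fin k, G.Adj (x : V) (f x i)) ∧
        B = Finset.image (fun p : ↥C × Fin k => f p.1 p.2) Finset.univ then
      ∏ x : ↥C, ((G.degree (x : V) : ℝ)⁻¹) ^ k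
    else 0

/-- `Pr(cov(u) > T)`: probability that after `T` rounds of the COBRA process started at
`C_0 = {u}` the sets `C_1, …, C_T` have not yet covered all vertices. -/
def prCovGT [Fintype V] [DecidableEq V] (G : SimpleGraph V) [DecidableRel G.Adj]
    (k : ℕ) (u : V) (T : ℕ) : ℝ :=
  trajPr (cobraStep G k) {u} T (fun ω => ∃ x : V, ∀ s : Fin (T+1), s ≠ 0 → x ∉ ω s)

/-- `Pr(infec(v) > T)`: probability that after `T` rounds of the BIPS process with
source `v` (started from `A_0 = {v}`) the infected set is not yet the whole vertex set. -/
def prInfecGT [Fintype V] [DecidableEq V] (G : SimpleGraph V) [DecidableRel G.Adj]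
    (r k : ℕ) (v : V) (T : ℕ) : ℝ :=
  trajPr (bipsStep G r k v) {v} T (fun ω => ∀ s : Fin (T+1), ω s ≠ Finset.univ)

/-- Probability that a vertex `u` hits `A` when it chooses one uniform random neighbour,
and then with probability `ρ` a second (independent, uniform) neighbour. -/
def pInfRho [Fintype V] [DecidableEq V] (G : SimpleGraph V) [DecidableRel G.Adj]
    (r : ℕ) (ρ : ℝ) (A : Finset V) (u : V) : ℝ :=
  1 - (1 - (degIn G A u : ℝ) / (r : ℝ)) * (1 - ρ * (degIn G A u : ℝ) / (r : ℝ))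

/-- One-step transition probability of the BIPS process with expected branching factor
`1 + ρ` and source `v`. -/
def bipsRhoStep [Fintype V] [DecidableEq V] (G : SimpleGraph V) [DecidableRel G.Adj]
    (r : ℕ) (ρ : ℝ) (v : V) (A B : Finset V) : ℝ :=
  if v ∈ B then
    ∏ u ∈ Finset.univ.erase v,
      (if u ∈ B then pInfRho G r ρ A u else 1 - pInfRho G r ρ A u)
  else 0

open scoped Classical in
/-- One-step transition probability of the COBRA process with expected branching factor
`1 + ρ`: each vertex of `C` chooses one uniform random neighbour and, independently with
probability `ρ`, a second uniform random neighbour; `B` is the set of all chosen vertices. -/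
def cobraRhoStep [Fintype V] [DecidableEq V] (G : SimpleGraph V) [DecidableRel G.Adj]
    (ρ : ℝ) (C B : Finset V) : ℝ :=
  ∑ f : ↥C → V, ∑ g : ↥C → Option V,
    if (∀ x : ↥C, G.Adj (x : V) (f x)) ∧
        (∀ x : ↥C, ∀ y : V, g x = some y → G.Adj (x : V) y) ∧
        B = Finset.image f Finset.univ ∪
          Finset.univ.biUnion (fun x : ↥C => (g x).toFinset) then
      ∏ x : ↥C, ((G.degree (x : V) : ℝ)⁻¹ *
        Option.elim (g x) (1 - ρ) (fun _ => ρ * (G.degree (x : V) : ℝ)⁻¹))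
    else 0

/-- `Pr(cov(u) > T)` for the COBRA process with expected branching factor `1 + ρ`. -/
def prCovRhoGT [Fintype V] [DecidableEq V] (G : SimpleGraph V) [DecidableRel G.Adj]
    (ρ : ℝ) (u : V) (T : ℕ) : ℝ :=
  trajPr (cobraRhoStep G ρ) {u} T (fun ω => ∃ x : V, ∀ s : Fin (T+1), s ≠ 0 → x ∉ ω s)

end

section Trajectories

variable {V : Type*} [DecidableEq V] (step : Finset V → Finset V → ℝ)

open scoped Classical in
lemma trajPr_zero [Fintype V] (A₀ : Finset V) (Q : (Fin 1 → Finset V) → Prop) :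
    trajPr step A₀ 0 Q = if Q (fun _ => A₀) then 1 else 0 := by
  rw [trajPr, Fintype.sum_eq_single (fun _ => A₀)]
  · simp [trajProb]
  · intro ω hω
    have h0 : ω 0 ≠ A₀ := fun h => hω (funext fun s => by rw [Fin.fin_one_eq_zero s, h])
    simp [trajProb, h0]

lemma trajProb_cons (A₀ a : Finset V) (T : ℕ) (ω : Fin (T + 1) → Finset V) :
    trajProb step A₀ (T + 1) (Fin.cons a ω) =
      if a = A₀ then step a (ω 0) * trajProb step (ω 0) T ω else 0 := by
  simp [trajProb, Fin.prod_univ_succ]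

lemma trajProb_of_ne {A₀ : Finset V} {T : ℕ} {ω : Fin (T + 1) → Finset V} (h : ω 0 ≠ A₀) :
    trajProb step A₀ T ω = 0 := by
  simp [trajProb, h]

open scoped Classical in
lemma trajPr_succ [Fintype V] (A₀ : Finset V) (T : ℕ) (Q : (Fin (T + 2) → Finset V) → Prop) :
    trajPr step A₀ (T + 1) Q =
      ∑ B, step A₀ B * trajPr step B T (fun ω => Q (Fin.cons A₀ ω)) := by
  have hcons : trajPr step A₀ (T + 1) Q = ∑ a, ∑ ω : Fin (T + 1) → Finset V,
      if Q (Fin.cons a ω) then trajProb step A₀ (T + 1) (Fin.cons a ω) else 0 := by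
    rw [trajPr, ← (Fin.consEquiv fun _ => Finset V).sum_comp, Fintype.sum_prod_type]
    rfl
  rw [hcons, Fintype.sum_eq_single A₀ fun a ha => by simp [trajProb_cons, ha]]
  simp only [trajProb_cons, if_true, trajPr, Finset.mul_sum]
  rw [sum_comm]
  refine sum_congr rfl fun ω _ => ?_
  rw [Fintype.sum_eq_single (ω 0) fun B hB => by simp [trajProb_of_ne step (Ne.symm hB)]]
  split_ifs <;> simp

open scoped Classical in
lemma trajPr_forall_succ [Fintype V] (P : Finset V → Prop) (A₀ : Finset V) (T : ℕ) :
    trajPr step A₀ (T + 1) (fun ω => ∀ s, P (ω s)) =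
      if P A₀ then ∑ B, step A₀ B * trajPr step B T (fun ω => ∀ s, P (ω s)) else 0 := by
  simp only [trajPr_succ, Fin.forall_fin_succ, Fin.cons_zero, Fin.cons_succ]
  split_ifs with h
  · simp [h]
  · simp [h, trajPr]

end Trajectories

lemma Finset.sum_prod_ite_mem {ι R : Type*} [Fintype ι] [DecidableEq ι] [CommSemiring R]
    (a b : ι → R) : ∑ B : Finset ι, ∏ u, (if u ∈ B then a u else b u) = ∏ u, (a u + b u) := by
  rw [Fintype.prod_add]
  refine sum_congr rfl fun B _ => ?_
  rw [prod_ite, filter_mem_eq_inter, univ_inter, filter_not, filter_mem_eq_inter, univ_inter,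
    compl_eq_univ_sdiff]

lemma Finset.sum_disjoint_prod_ite_mem {ι R : Type*} [Fintype ι] [DecidableEq ι]
    [CommSemiring R] (C : Finset ι) (a b : ι → R) :
    ∑ B : Finset ι, (if C ∩ B = ∅ then ∏ u, (if u ∈ B then a u else b u) else 0) =
      ∏ u, (if u ∈ C then b u else a u + b u) := by
  have hB : ∀ B : Finset ι, (if C ∩ B = ∅ then ∏ u, (if u ∈ B then a u else b u) else 0) =
      ∏ u, (if u ∈ B then (if u ∈ C then 0 else a u) else b u) := by
    intro B
    split_ifs with hCB
    · refine prod_congr rfl fun u _ => ?_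
      by_cases huB : u ∈ B
      · have huC : u ∉ C := fun huC => by simpa [hCB] using mem_inter.2 ⟨huC, huB⟩
        simp [huB, huC]
      · simp [huB]
    · obtain ⟨u, hu⟩ := nonempty_iff_ne_empty.2 hCB
      rw [mem_inter] at hu
      exact (prod_eq_zero (mem_univ u) (by simp [hu.1, hu.2])).symm
  simp only [hB, sum_prod_ite_mem]
  refine prod_congr rfl fun u _ => ?_
  split_ifs <;> simp

lemma Finset.sum_mul_sum_ite_comm {α R : Type*} [Fintype α] [CommSemiring R] (p : α → α → Prop)
    [DecidableRel p] (f g : α → R) :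
    ∑ b, f b * ∑ a, (if p b a then g a else 0) = ∑ a, g a * ∑ b, (if p b a then f b else 0) := by
  simp_rw [mul_sum, mul_ite, mul_zero]
  rw [sum_comm]
  simp_rw [mul_comm]

lemma sum_ite_chainProb_succ {V : Type*} [Fintype V] [DecidableEq V]
    (step : Finset V → Finset V → ℝ) (A₀ : Finset V) (t : ℕ) (p : Finset V → Prop)
    [DecidablePred p] :
    ∑ B, (if p B then chainProb step A₀ (t + 1) B else 0) =
      ∑ A, chainProb step A₀ t A * ∑ B, (if p B then step A B else 0) := by
  simp_rw [chainProb, mul_sum, mul_ite, mul_zero]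
  rw [sum_comm]
  refine sum_congr rfl fun B _ => ?_
  split_ifs <;> simp

section BIPS

variable {V : Type*} [Fintype V] [DecidableEq V] (G : SimpleGraph V) [DecidableRel G.Adj]
  (r k : ℕ) (v : V)

lemma chainProb_bipsStep_eq_zero_of_notMem {B : Finset V} (hB : v ∉ B) :
    ∀ t, chainProb (bipsStep G r k v) {v} t B = 0
  | 0 => by
    rw [chainProb, if_neg]
    rintro rfl
    exact hB (mem_singleton_self v)
  | _ + 1 => by simp [chainProb, bipsStep, hB]

lemma sum_chainProb_bipsStep_disjoint_of_mem {C : Finset V} (hv : v ∈ C) (t : ℕ) :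
    ∑ B, (if C ∩ B = ∅ then chainProb (bipsStep G r k v) {v} t B else 0) = 0 := by
  refine sum_eq_zero fun B _ => ?_
  split_ifs with hCB
  · exact chainProb_bipsStep_eq_zero_of_notMem G r k v
      (fun hvB => by simpa [hCB] using mem_inter.2 ⟨hv, hvB⟩) _
  · rfl

lemma bipsStep_eq_prod (A B : Finset V) :
    bipsStep G r k v A B = ∏ u, if u ∈ B then (if u = v then 1 else pInf G r k A u)
      else (if u = v then 0 else 1 - pInf G r k A u) := by
  rw [bipsStep, ← mul_prod_erase univ _ (mem_univ v)]
  by_cases hvB : v ∈ B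
  · rw [if_pos hvB, if_pos hvB, if_pos rfl, one_mul]
    refine prod_congr rfl fun u hu => ?_
    simp [ne_of_mem_erase hu]
  · rw [if_neg hvB, if_neg hvB, if_pos rfl, zero_mul]

lemma sum_bipsStep_disjoint {C : Finset V} (hv : v ∉ C) (A : Finset V) :
    ∑ B, (if C ∩ B = ∅ then bipsStep G r k v A B else 0) = ∏ u ∈ C, (1 - pInf G r k A u) := by
  simp only [bipsStep_eq_prod]
  rw [sum_disjoint_prod_ite_mem, ← Fintype.prod_ite_mem C]
  refine prod_congr rfl fun u _ => ?_
  by_cases huv : u = v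
  · subst huv
    simp [hv]
  · simp [huv]

end BIPS

section COBRA

variable {V : Type*} [Fintype V] [DecidableEq V] (G : SimpleGraph V) [DecidableRel G.Adj]

lemma mem_piFinset_neighborFinset_sdiff_iff {k : ℕ} {C A : Finset V} (f : C → Fin k → V) :
    f ∈ Fintype.piFinset (fun x : C => Fintype.piFinset fun _ : Fin k => G.neighborFinset x \ A) ↔
      (∀ (x : C) i, G.Adj x (f x i)) ∧ image (fun p : C × Fin k => f p.1 p.2) univ ∩ A = ∅ := by
  simp only [Fintype.mem_piFinset, mem_sdiff, SimpleGraph.mem_neighborFinset, forall_and,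
    eq_empty_iff_forall_notMem, mem_inter, mem_image, mem_univ, true_and, not_and,
    forall_exists_index, Prod.forall]
  refine and_congr_right fun _ => ⟨?_, fun h x i => h _ x i rfl⟩
  rintro h _ x i rfl
  exact h x i

lemma sum_cobraStep_disjoint (k : ℕ) (C A : Finset V) :
    ∑ B, (if B ∩ A = ∅ then cobraStep G k C B else 0) =
      ∏ x ∈ C, ((#(G.neighborFinset x \ A) : ℝ) * (G.degree x : ℝ)⁻¹) ^ k := by
  set w : ℝ := ∏ x : C, ((G.degree (x : V) : ℝ)⁻¹) ^ k
  have hB : ∀ B, (if B ∩ A = ∅ then cobraStep G k C B else 0) =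
      ∑ f : C → Fin k → V, if image (fun p : C × Fin k => f p.1 p.2) univ = B then
        (if (∀ (x : C) i, G.Adj x (f x i)) ∧
          image (fun p : C × Fin k => f p.1 p.2) univ ∩ A = ∅ then w else 0) else 0 := by
    intro B
    rw [cobraStep]
    split_ifs with hBA
    · refine sum_congr rfl fun f _ => ?_
      by_cases himg : image (fun p : C × Fin k => f p.1 p.2) univ = B
      · subst himg
        simp only [hBA, and_true, if_true]
        rfl
      · simp [himg, Ne.symm himg]
    · refine (sum_eq_zero fun f _ => ?_).symm
      by_cases himg : image (fun p : C × Fin k => f p.1 p.2) univ = B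
      · subst himg
        simp [hBA]
      · simp [himg]
  rw [sum_congr rfl fun B _ => hB B, sum_comm]
  simp only [sum_ite_eq, mem_univ, if_true, ← mem_piFinset_neighborFinset_sdiff_iff]
  rw [sum_ite_mem, univ_inter, sum_const, nsmul_eq_mul]
  simp only [Fintype.card_piFinset, prod_const, card_univ, Fintype.card_fin, Nat.cast_prod,
    Nat.cast_pow, w, ← prod_mul_distrib, ← mul_pow]
  exact prod_coe_sort C fun x => ((#(G.neighborFinset x \ A) : ℝ) * (G.degree x : ℝ)⁻¹) ^ k

variable {G}

lemma SimpleGraph.IsRegularOfDegree.card_neighborFinset_sdiff_mul_inv_degree {r : ℕ}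
    (hreg : G.IsRegularOfDegree r) (hr : r ≠ 0) (A : Finset V) (x : V) :
    (#(G.neighborFinset x \ A) : ℝ) * (G.degree x : ℝ)⁻¹ = 1 - degIn G A x / r := by
  have hcard : (#(G.neighborFinset x \ A) : ℝ) = r - degIn G A x := by
    rw [eq_sub_iff_add_eq]
    exact_mod_cast by rw [degIn, card_sdiff_add_card_inter, card_neighborFinset_eq_degree, hreg x]
  have hr' : (r : ℝ) ≠ 0 := Nat.cast_ne_zero.2 hr
  rw [hreg x, hcard]
  field_simp

end COBRA

lemma SimpleGraph.Connected.subsingleton_of_isRegularOfDegree_zero {V : Type*} [Fintype V]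
    {G : SimpleGraph V} [DecidableRel G.Adj] (hconn : G.Connected)
    (hreg : G.IsRegularOfDegree 0) : Subsingleton V := by
  obtain rfl : G = ⊥ := by
    ext x y
    simpa using (G.degree_eq_zero x).1 (hreg x) y
  exact (SimpleGraph.connected_bot_iff.1 hconn).1

theorem cobraStep_bipsStep_duality {V : Type*} [Fintype V] [DecidableEq V] {G : SimpleGraph V}
    [DecidableRel G.Adj] {r : ℕ} (hreg : G.IsRegularOfDegree r) (k : ℕ) {v : V}
    {C : Finset V} (hv : v ∉ C) (hr : r ≠ 0 ∨ C = ∅) (A : Finset V) :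
    ∑ B, (if B ∩ A = ∅ then cobraStep G k C B else 0) =
      ∑ B, (if C ∩ B = ∅ then bipsStep G r k v A B else 0) := by
  rw [sum_cobraStep_disjoint, sum_bipsStep_disjoint G r k v hv]
  refine prod_congr rfl fun x hx => ?_
  rw [hreg.card_neighborFinset_sdiff_mul_inv_degree (hr.resolve_right (ne_empty_of_mem hx)),
    pInf, sub_sub_cancel]

open scoped Classical in
theorem cobra_bips_duality_general {V : Type*} [Fintype V] [DecidableEq V] (G : SimpleGraph V)
    [DecidableRel G.Adj] (r : ℕ) (hconn : G.Connected) (hreg : G.IsRegularOfDegree r)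
    (k : ℕ) (v : V) (C : Finset V) (t : ℕ) :
    trajPr (cobraStep G k) C t (fun ω => ∀ s : Fin (t+1), v ∉ ω s) =
      ∑ B : Finset V, (if C ∩ B = ∅ then chainProb (bipsStep G r k v) {v} t B else 0) := by
  have hr : ∀ {C : Finset V}, v ∉ C → r ≠ 0 ∨ C = ∅ := by
    intro C hv
    refine or_iff_not_imp_left.2 fun hr => eq_empty_of_forall_notMem fun x hx => hv ?_
    have := hconn.subsingleton_of_isRegularOfDegree_zero (not_not.1 hr ▸ hreg)
    exact Subsingleton.elim x v ▸ hx
  induction t generalizing C with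
  | zero =>
    rw [trajPr_zero, Fintype.sum_eq_single {v} fun B hB => by simp [chainProb, hB]]
    by_cases hv : v ∈ C <;> simp [chainProb, hv, inter_singleton_of_mem, inter_singleton_of_notMem]
  | succ t ih =>
    rw [trajPr_forall_succ _ (fun A => v ∉ A)]
    by_cases hv : v ∈ C
    · rw [if_neg (not_not.2 hv), sum_chainProb_bipsStep_disjoint_of_mem G r k v hv]
    · simp_rw [if_pos hv, ih]
      rw [sum_mul_sum_ite_comm, sum_ite_chainProb_succ]
      simp_rw [cobraStep_bipsStep_duality hreg k hv (hr hv)]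

open scoped Classical in
/-- duality, Theorem 4 of the paper.  For a connected `r`-regular
graph `G`, `k ≥ 1`, a vertex `v`, a set `C ⊆ V` and `t ≥ 0`, the probability that the
COBRA process with branching factor `k` started from `C_0 = C` has not hit `v` by time
`t` equals the probability that in the BIPS process with source `v` and parameter `k`
the infected set `A_t` is disjoint from `C`. -/
theorem cobra_bips_duality {V : Type*} [Fintype V] [DecidableEq V] (G : SimpleGraph V)
    [DecidableRel G.Adj] (r : ℕ) (hconn : G.Connected) (hreg : G.IsRegularOfDegree r)
    (k : ℕ) (hk : 1 ≤ k) (v : V) (C : Finset V) (t : ℕ) :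
    trajPr (cobraStep G k) C t (fun ω => ∀ s : Fin (t+1), v ∉ ω s) =
      ∑ B : Finset V, (if C ∩ B = ∅ then chainProb (bipsStep G r k v) {v} t B else 0) :=
  cobra_bips_duality_general G r hconn hreg k v C t
end

section
/- Let G be a connected r-regular graph on n vertices with λ < 1, let 0 < ρ ≤ 1, and consider the BIPS process on G with source v and expected branching factor 1 + ρ. Then for every set A ⊆ V with v ∈ A and every t ≥ 0, E(|A_{t+1}| | A_t = A) ≥ |A|·(1 + ρ·(1 − λ²)·(1 − |A|/n)). -/
open Finset

/-!
Put `q = P 𝟙_A`, so `q u = d_A(u)/r` and each `u ≠ v` is infected independently with probability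
`p u = q u + ρ (q u - q u²)`. Hence `E|A_{t+1}| = 1 + ∑_{u ≠ v} p u ≥ ∑_u p u = |A| + ρ (|A| - ‖q‖²)`,
as `∑ q = |A|` by regularity. Expanding `𝟙_A - |A|/n` in an orthonormal eigenbasis of the symmetric
matrix `P`, and using that an eigenvector minus its mean is again an eigenvector for the same
eigenvalue, gives `‖q‖² - |A|²/n ≤ λ² (|A| - |A|²/n)`, which is the claim. For `r = 0`
connectivity leaves a single vertex.
-/

open Matrix

section Bernoulli
variable {α R : Type*} [DecidableEq α] [CommRing R]

def bernoulliWeight (p : α → R) (s S : Finset α) : R :=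
  ∏ u ∈ s, if u ∈ S then p u else 1 - p u

variable (p : α → R)

lemma bernoulliWeight_insert_of_notMem {a : α} {s : Finset α} (ha : a ∉ s) (S : Finset α) :
    bernoulliWeight p s (insert a S) = bernoulliWeight p s S :=
  prod_congr rfl fun u hu => by simp only [mem_insert, ne_of_mem_of_not_mem hu ha, false_or]

lemma sum_powerset_insert_bernoulliWeight_mul {a : α} {s : Finset α} (ha : a ∉ s)
    (g : Finset α → R) :
    ∑ S ∈ (insert a s).powerset, bernoulliWeight p (insert a s) S * g S =
      ∑ S ∈ s.powerset, bernoulliWeight p s S * ((1 - p a) * g S + p a * g (insert a S)) := by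
  rw [sum_powerset_insert ha, ← sum_add_distrib]
  refine sum_congr rfl fun S hS => ?_
  have haS : a ∉ S := fun h => ha (mem_powerset.mp hS h)
  simp only [bernoulliWeight, prod_insert ha, if_neg haS, mem_insert_self, if_true]
  rw [← bernoulliWeight, ← bernoulliWeight, bernoulliWeight_insert_of_notMem p ha]
  ring

lemma sum_bernoulliWeight (s : Finset α) : ∑ S ∈ s.powerset, bernoulliWeight p s S = 1 := by
  induction s using Finset.induction_on with
  | empty => simp [bernoulliWeight]
  | insert a s ha ih =>
    simpa [ih] using sum_powerset_insert_bernoulliWeight_mul p ha 1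

lemma sum_bernoulliWeight_mul_card (s : Finset α) :
    ∑ S ∈ s.powerset, bernoulliWeight p s S * S.card = ∑ u ∈ s, p u := by
  induction s using Finset.induction_on with
  | empty => simp
  | insert a s ha ih =>
    rw [sum_powerset_insert_bernoulliWeight_mul p ha, sum_insert ha]
    have hcard : ∀ S ∈ s.powerset,
        bernoulliWeight p s S * ((1 - p a) * S.card + p a * (insert a S).card) =
          bernoulliWeight p s S * S.card + p a * bernoulliWeight p s S := fun S hS => by
      rw [card_insert_of_notMem fun h => ha (mem_powerset.mp hS h)]
      push_cast
      ring
    rw [sum_congr rfl hcard, sum_add_distrib, ih, ← mul_sum, sum_bernoulliWeight]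
    ring

end Bernoulli

section Hermitian
variable {n : Type*} [Fintype n]

lemma OrthonormalBasis.sum_sq_dotProduct (b : OrthonormalBasis n ℝ (EuclideanSpace ℝ n))
    (f : n → ℝ) : ∑ j, (⇑(b j) ⬝ᵥ f) ^ 2 = ∑ i, f i ^ 2 := by
  have h := b.sum_inner_mul_inner (WithLp.toLp 2 f) (WithLp.toLp 2 f)
  simp only [EuclideanSpace.inner_eq_star_dotProduct, star_trivial] at h
  simp only [sq, dotProduct] at h ⊢
  convert h using 2 with j
  simp only [mul_comm]

theorem Matrix.IsHermitian.sum_sq_mulVec_le [DecidableEq n] {M : Matrix n n ℝ}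
    (hM : M.IsHermitian) {f : n → ℝ} {c : ℝ} (h : ∀ (μ : ℝ) (b : n → ℝ), M *ᵥ b = μ • b → b ⬝ᵥ f ≠ 0 → μ ^ 2 ≤ c) :
    ∑ i, (M *ᵥ f) i ^ 2 ≤ c * ∑ i, f i ^ 2 := by
  set b := hM.eigenvectorBasis
  have hcoeff : ∀ j, ⇑(b j) ⬝ᵥ (M *ᵥ f) = hM.eigenvalues j * (⇑(b j) ⬝ᵥ f) := fun j => by
    rw [dotProduct_mulVec, ← mulVec_transpose, ← conjTranspose_eq_transpose_of_trivial, hM,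
      hM.mulVec_eigenvectorBasis, smul_dotProduct, smul_eq_mul]
  rw [← b.sum_sq_dotProduct (M *ᵥ f), ← b.sum_sq_dotProduct f, mul_sum]
  refine sum_le_sum fun j _ => ?_
  rw [hcoeff, mul_pow]
  by_cases hj : ⇑(b j) ⬝ᵥ f = 0
  · simp [hj]
  · exact mul_le_mul_of_nonneg_right (h _ _ (hM.mulVec_eigenvectorBasis j) hj) (sq_nonneg _)

end Hermitian

section TransMatrix
variable {V : Type*} [Fintype V] (G : SimpleGraph V) [DecidableRel G.Adj] (r : ℕ)

lemma transMatrix_comm (x y : V) : transMatrix G r x y = transMatrix G r y x := by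
  simp [transMatrix, G.adj_comm]

lemma transMatrix_isHermitian : (transMatrix G r).IsHermitian :=
  ext fun x y => transMatrix_comm G r y x

variable {G r}

lemma sum_transMatrix_row (hreg : G.IsRegularOfDegree r) (hr : r ≠ 0) (x : V) :
    ∑ y, transMatrix G r x y = 1 := by
  classical
  simp only [transMatrix, of_apply]
  rw [← sum_filter, ← SimpleGraph.neighborFinset_eq_filter, sum_const, nsmul_eq_mul,
    SimpleGraph.card_neighborFinset_eq_degree, hreg x, mul_inv_cancel₀ (Nat.cast_ne_zero.mpr hr)]

lemma transMatrix_mulVec_sub_const (hreg : G.IsRegularOfDegree r) (hr : r ≠ 0) (f : V → ℝ)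
    (c : ℝ) : transMatrix G r *ᵥ (fun x => f x - c) = fun x => (transMatrix G r *ᵥ f) x - c := by
  ext x
  simp only [mulVec, dotProduct, mul_sub, sum_sub_distrib, ← sum_mul, sum_transMatrix_row hreg hr,
    one_mul]

lemma sum_transMatrix_mulVec (hreg : G.IsRegularOfDegree r) (hr : r ≠ 0) (f : V → ℝ) :
    ∑ x, (transMatrix G r *ᵥ f) x = ∑ x, f x := by
  simp only [mulVec, dotProduct]
  rw [sum_comm]
  refine sum_congr rfl fun y _ => ?_
  simp only [← sum_mul, transMatrix_comm G r _ y, sum_transMatrix_row hreg hr, one_mul]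

end TransMatrix

section SecondEigen
open scoped Matrix.Norms.Operator
variable {V : Type*} [Fintype V] {G : SimpleGraph V} [DecidableRel G.Adj] {r : ℕ}

theorem Matrix.abs_le_norm_of_mulVec_eq_smul {m : Type*} [Fintype m] {A : Matrix m m ℝ} {μ : ℝ}
    {f : m → ℝ} (hf : f ≠ 0) (h : A *ᵥ f = μ • f) : |μ| ≤ ‖A‖ := by
  have hle := linfty_opNorm_mulVec A f
  rw [h, norm_smul, Real.norm_eq_abs] at hle
  exact le_of_mul_le_mul_right hle (norm_pos_iff.mpr hf)

lemma abs_le_secondEigen {μ : ℝ} {f : V → ℝ} (hf : f ≠ 0) (hsum : ∑ x, f x = 0)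
    (h : transMatrix G r *ᵥ f = μ • f) : |μ| ≤ secondEigen G r := by
  refine le_csSup ⟨‖transMatrix G r‖, ?_⟩ ⟨μ, f, rfl, hf, hsum, h⟩
  rintro _ ⟨μ', f', rfl, hf', -, h'⟩
  exact abs_le_norm_of_mulVec_eq_smul hf' h'

end SecondEigen

section Mean
variable {V : Type*} [Fintype V]

lemma sum_sub_mean (f : V → ℝ) : ∑ x, (f x - (∑ y, f y) / Fintype.card V) = 0 := by
  rcases isEmpty_or_nonempty V with hV | hV
  · simp
  · rw [sum_sub_distrib, sum_const, card_univ, nsmul_eq_mul, mul_div_cancel₀ _ (by positivity),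
      sub_self]

lemma sum_sq_sub_mean (f : V → ℝ) :
    ∑ x, (f x - (∑ y, f y) / Fintype.card V) ^ 2 =
      ∑ x, f x ^ 2 - (∑ x, f x) ^ 2 / Fintype.card V := by
  rcases isEmpty_or_nonempty V with hV | hV
  · simp
  · have hn : (Fintype.card V : ℝ) ≠ 0 := by positivity
    simp only [sub_sq, sum_add_distrib, sum_sub_distrib, sum_const, card_univ, nsmul_eq_mul,
      ← sum_mul, ← mul_sum]
    field_simp
    ring

end Mean

section SpectralGap
variable {V : Type*} [Fintype V] {G : SimpleGraph V} [DecidableRel G.Adj] {r : ℕ}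

lemma transMatrix_mulVec_sub_mean_eq_smul (hreg : G.IsRegularOfDegree r) (hr : r ≠ 0)
    {μ : ℝ} {b : V → ℝ} (h : transMatrix G r *ᵥ b = μ • b) :
    transMatrix G r *ᵥ (fun x => b x - (∑ y, b y) / Fintype.card V) =
      μ • fun x => b x - (∑ y, b y) / Fintype.card V := by
  have hfix : μ * ∑ y, b y = ∑ y, b y := by
    simpa only [h, Pi.smul_apply, smul_eq_mul, mul_sum] using sum_transMatrix_mulVec hreg hr b
  rw [transMatrix_mulVec_sub_const hreg hr, h]
  ext x
  simp only [Pi.smul_apply, smul_eq_mul]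
  rw [mul_sub, ← mul_div_assoc, hfix]

lemma sq_le_secondEigen_sq (hreg : G.IsRegularOfDegree r) (hr : r ≠ 0) {f : V → ℝ}
    (hf : ∑ x, f x = 0) {μ : ℝ} {b : V → ℝ} (h : transMatrix G r *ᵥ b = μ • b)
    (hbf : b ⬝ᵥ f ≠ 0) : μ ^ 2 ≤ secondEigen G r ^ 2 := by
  set c := (∑ y, b y) / Fintype.card V
  have hcentered : (fun x => b x - c) ⬝ᵥ f = b ⬝ᵥ f := by
    simp only [dotProduct, sub_mul, sum_sub_distrib, ← mul_sum, hf, mul_zero, sub_zero]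
  have hne : (fun x => b x - c) ≠ 0 := fun h0 => hbf (by rw [← hcentered, h0, zero_dotProduct])
  have hμ := abs_le_secondEigen hne (sum_sub_mean b)
    (transMatrix_mulVec_sub_mean_eq_smul hreg hr h)
  simpa only [sq_abs] using pow_le_pow_left₀ (abs_nonneg μ) hμ 2

lemma sum_sq_transMatrix_mulVec_le (hreg : G.IsRegularOfDegree r) (hr : r ≠ 0) (f : V → ℝ) :
    ∑ x, (transMatrix G r *ᵥ f) x ^ 2 - (∑ x, f x) ^ 2 / Fintype.card V ≤
      secondEigen G r ^ 2 * (∑ x, f x ^ 2 - (∑ x, f x) ^ 2 / Fintype.card V) := by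
  classical
  have hsum : ∑ y, f y = ∑ y, (transMatrix G r *ᵥ f) y := (sum_transMatrix_mulVec hreg hr f).symm
  calc _ = ∑ x, (transMatrix G r *ᵥ fun x => f x - (∑ y, f y) / Fintype.card V) x ^ 2 := by
        rw [transMatrix_mulVec_sub_const hreg hr, hsum, sum_sq_sub_mean]
    _ ≤ secondEigen G r ^ 2 * ∑ x, (f x - (∑ y, f y) / Fintype.card V) ^ 2 :=
        (transMatrix_isHermitian G r).sum_sq_mulVec_le
          fun μ b h hbg => sq_le_secondEigen_sq hreg hr (sum_sub_mean f) h hbg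
    _ = _ := by rw [sum_sq_sub_mean]

end SpectralGap

section Bips
variable {V : Type*} [Fintype V] [DecidableEq V] {G : SimpleGraph V} [DecidableRel G.Adj]
  {r : ℕ} {ρ : ℝ}

lemma transMatrix_mulVec_indicator (A : Finset V) (u : V) :
    (transMatrix G r *ᵥ fun x => if x ∈ A then (1 : ℝ) else 0) u = degIn G A u / r := by
  simp only [mulVec, dotProduct, transMatrix, of_apply, mul_ite, mul_one, mul_zero]
  rw [sum_ite_mem, univ_inter, ← sum_filter, sum_const, nsmul_eq_mul, div_eq_mul_inv, degIn,
    SimpleGraph.neighborFinset_eq_filter, filter_inter, univ_inter]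

lemma pInfRho_eq (A : Finset V) (u : V) :
    pInfRho G r ρ A u = degIn G A u / r + ρ * (degIn G A u / r - (degIn G A u / r : ℝ) ^ 2) := by
  rw [pInfRho, mul_div_assoc]
  ring

lemma pInfRho_le_one (hreg : G.IsRegularOfDegree r) (hρ1 : ρ ≤ 1) (A : Finset V) (u : V) :
    pInfRho G r ρ A u ≤ 1 := by
  have hdeg : degIn G A u ≤ r := by
    rw [← hreg u, ← SimpleGraph.card_neighborFinset_eq_degree]
    exact card_le_card inter_subset_left
  have hq0 : 0 ≤ (degIn G A u : ℝ) / r := by positivity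
  have hq1 : (degIn G A u : ℝ) / r ≤ 1 := div_le_one_of_le₀ (by exact_mod_cast hdeg) r.cast_nonneg
  rw [pInfRho, mul_div_assoc, sub_le_self_iff]
  exact mul_nonneg (by linarith) (by nlinarith)

lemma card_mul_le_sum_pInfRho (hreg : G.IsRegularOfDegree r) (hr : r ≠ 0) (hρ : 0 ≤ ρ)
    (A : Finset V) :
    (A.card : ℝ) * (1 + ρ * (1 - secondEigen G r ^ 2) * (1 - A.card / Fintype.card V)) ≤
      ∑ u, pInfRho G r ρ A u := by
  set a : ℝ := (A.card : ℝ)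
  set n : ℝ := (Fintype.card V : ℝ)
  set q : V → ℝ := fun u => degIn G A u / r
  have hind : ∑ x : V, (if x ∈ A then (1 : ℝ) else 0) = a := by simp [a]
  have hind_sq : ∑ x : V, (if x ∈ A then (1 : ℝ) else 0) ^ 2 = a := by simp [a]
  have hPq : (transMatrix G r *ᵥ fun x => if x ∈ A then (1 : ℝ) else 0) = q :=
    funext (transMatrix_mulVec_indicator A)
  have hq : ∑ u, q u = a := hPq ▸ (sum_transMatrix_mulVec hreg hr _).trans hind
  have hspec := sum_sq_transMatrix_mulVec_le hreg hr fun x => if x ∈ A then (1 : ℝ) else 0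
  rw [hPq, hind, hind_sq] at hspec
  simp only [pInfRho_eq]
  rw [sum_add_distrib, ← mul_sum, sum_sub_distrib, hq]
  calc a * (1 + ρ * (1 - secondEigen G r ^ 2) * (1 - a / n))
      = a + ρ * ((1 - secondEigen G r ^ 2) * (a - a ^ 2 / n)) := by ring
    _ ≤ a + ρ * (a - ∑ u, q u ^ 2) := by gcongr; linarith

lemma bipsRhoStep_eq_ite (v : V) (A B : Finset V) :
    bipsRhoStep G r ρ v A B =
      if v ∈ B then bernoulliWeight (pInfRho G r ρ A) (univ.erase v) B else 0 := rfl

lemma sum_bipsRhoStep_mul_card (v : V) (A : Finset V) :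
    ∑ B, bipsRhoStep G r ρ v A B * B.card = 1 + ∑ u ∈ univ.erase v, pInfRho G r ρ A u := by
  have hv : v ∉ univ.erase v := notMem_erase v univ
  have huniv : (univ : Finset (Finset V)) = (insert v (univ.erase v)).powerset := by
    rw [insert_erase (mem_univ v), powerset_univ]
  have hzero : ∀ S ∈ (univ.erase v).powerset, bipsRhoStep G r ρ v A S * S.card = 0 :=
    fun S hS => by rw [bipsRhoStep_eq_ite, if_neg fun h => hv (mem_powerset.mp hS h), zero_mul]
  have hinsert : ∀ S ∈ (univ.erase v).powerset,
      bipsRhoStep G r ρ v A (insert v S) * (insert v S).card =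
        bernoulliWeight (pInfRho G r ρ A) (univ.erase v) S * S.card +
          bernoulliWeight (pInfRho G r ρ A) (univ.erase v) S := fun S hS => by
    rw [bipsRhoStep_eq_ite, if_pos (mem_insert_self v S), bernoulliWeight_insert_of_notMem _ hv,
      card_insert_of_notMem fun h => hv (mem_powerset.mp hS h)]
    push_cast
    ring
  rw [huniv, sum_powerset_insert hv, sum_congr rfl hzero, sum_const_zero, zero_add,
    sum_congr rfl hinsert, sum_add_distrib, sum_bernoulliWeight_mul_card, sum_bernoulliWeight,
    add_comm]

end Bips

lemma SimpleGraph.IsRegularOfDegree.eq_bot {V : Type*} {G : SimpleGraph V} [G.LocallyFinite]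
    (h : G.IsRegularOfDegree 0) : G = ⊥ := by
  ext x y
  simp only [SimpleGraph.bot_adj, iff_false]
  intro hxy
  have hempty := h x
  rw [← SimpleGraph.card_neighborFinset_eq_degree, card_eq_zero] at hempty
  exact notMem_empty y (hempty ▸ (G.mem_neighborFinset x y).mpr hxy)

lemma card_mul_one_add_mul_le_one_of_subsingleton {V : Type*} [Fintype V] [Subsingleton V]
    (A : Finset V) (c : ℝ) : (A.card : ℝ) * (1 + c * (1 - A.card / Fintype.card V)) ≤ 1 := by
  have hAV := card_le_univ A
  have hV := Fintype.card_le_one_iff_subsingleton.mpr ‹_›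
  have hA : A.card ≤ 1 := hAV.trans hV
  interval_cases h : A.card
  · simp
  · rw [show Fintype.card V = 1 by omega]
    simp

theorem bips_rho_expected_growth_general {V : Type*} [Fintype V] [DecidableEq V]
    (G : SimpleGraph V) [DecidableRel G.Adj] (r : ℕ) (hconn : G.Connected)
    (hreg : G.IsRegularOfDegree r)
    (ρ : ℝ) (hρ : 0 < ρ) (hρ1 : ρ ≤ 1) (v : V) (A : Finset V) :
    (A.card : ℝ) *
        (1 + ρ * (1 - secondEigen G r ^ 2) * (1 - (A.card : ℝ) / (Fintype.card V : ℝ))) ≤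
      ∑ B : Finset V, bipsRhoStep G r ρ v A B * (B.card : ℝ) := by
  rw [sum_bipsRhoStep_mul_card]
  rcases eq_or_ne r 0 with rfl | hr
  · have : Subsingleton V := (SimpleGraph.connected_bot_iff.mp (hreg.eq_bot ▸ hconn)).1
    have herase : univ.erase v = ∅ := by
      ext x
      simp [Subsingleton.elim x v]
    simpa [herase] using card_mul_one_add_mul_le_one_of_subsingleton A _
  · have hsplit := add_sum_erase univ (pInfRho G r ρ A) (mem_univ v)
    linarith [card_mul_le_sum_pInfRho hreg hr hρ.le A, pInfRho_le_one hreg hρ1 A v]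

/-- Corollary 6 of the paper.  For a connected `r`-regular graph `G`
on `n` vertices with `λ < 1`, `0 < ρ ≤ 1`, and the BIPS process with source `v` and
expected branching factor `1 + ρ`, for every `A ⊆ V` with `v ∈ A`:
`E(|A_{t+1}| | A_t = A) ≥ |A|·(1 + ρ(1-λ²)(1 - |A|/n))`. -/
theorem bips_rho_expected_growth {V : Type*} [Fintype V] [DecidableEq V]
    (G : SimpleGraph V) [DecidableRel G.Adj] (r : ℕ) (hconn : G.Connected)
    (hreg : G.IsRegularOfDegree r) (hlam : secondEigen G r < 1)
    (ρ : ℝ) (hρ : 0 < ρ) (hρ1 : ρ ≤ 1) (v : V) (A : Finset V) (hv : v ∈ A) :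
    (A.card : ℝ) *
        (1 + ρ * (1 - secondEigen G r ^ 2) * (1 - (A.card : ℝ) / (Fintype.card V : ℝ))) ≤
      ∑ B : Finset V, bipsRhoStep G r ρ v A B * (B.card : ℝ) :=
  bips_rho_expected_growth_general G r hconn hreg ρ hρ hρ1 v A
end
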